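/- arXiv:2102.10702 — 10 statements merged into one kernel-verified Lean document; each statement's English description precedes it below -/
import Mathlib

section
/- For every b ∈ {−1,+1}^n, the straight-line curve γ(t) = ζ_b + t·Γ(b), t ∈ [0,1], satisfies s(γ(t)) = b for every t ∈ (0,1); consequently F̃(γ(t)) = Γ(b) for all t ∈ (0,1), γ is a sampled trajectory on [0,1] (i.e. γ(t) = γ(0) + ∫_0^t F̃(γ(τ)) dτ for all t ∈ [0,1]), and γ flows the point ζ_b to the point ζ_b + Γ(b) in one unit of time. -/
open Matrix

/-- the sign vector `s(x)` of a point: `s(x)_j = +1` iff `⟨η_j, x − ρ⟩ ≥ 0`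
(`true ↔ +1`, `false ↔ −1`). -/
noncomputable def sgnv {d n : ℕ} (η : Fin n → Fin d → ℝ) (ρ : Fin d → ℝ)
    (x : Fin d → ℝ) : Fin n → Bool :=
  fun j => decide (0 ≤ η j ⬝ᵥ (x - ρ))

/-- the sampled vector field `F̃(x) = Γ(s(x))`. -/
noncomputable def Ftil {d n : ℕ} (η : Fin n → Fin d → ℝ) (ρ : Fin d → ℝ)
    (Γ : (Fin n → Bool) → Fin d → ℝ) (x : Fin d → ℝ) : Fin d → ℝ :=
  Γ (sgnv η ρ x)

/-- the straight-line curve `γ(t) = ζ_b + t·Γ(b)` satisfies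
`s(γ(t)) = b` on `(0,1)`, hence `F̃(γ(t)) = Γ(b)` there; it is a sampled
trajectory on `[0,1]` and flows `ζ_b` to `ζ_b + Γ(b)` in one unit of time. -/
theorem stmt2 {d n : ℕ} (hd : 1 ≤ d) (hn : 1 ≤ n) (hnd : n ≤ d)
    (ρ : Fin d → ℝ) (η : Fin n → Fin d → ℝ) (hη : LinearIndependent ℝ η)
    (Γ : (Fin n → Bool) → Fin d → ℝ)
    (hev : ∀ (j : Fin n) (b : Fin n → Bool), 0 < η j ⬝ᵥ Γ b)
    (ζ : (Fin n → Bool) → Fin d → ℝ)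
    (hζspan : ∀ b, ζ b - ρ ∈ Submodule.span ℝ (Set.range η))
    (hζp : ∀ b (j : Fin n), b j = true → η j ⬝ᵥ (ζ b - ρ) = 0)
    (hζm : ∀ b (j : Fin n), b j = false → η j ⬝ᵥ (ζ b + Γ b - ρ) = 0)
    (b : Fin n → Bool) (γ : ℝ → Fin d → ℝ)
    (hγ : ∀ t : ℝ, γ t = ζ b + t • Γ b) :
    (∀ t ∈ Set.Ioo (0 : ℝ) 1, sgnv η ρ (γ t) = b) ∧
    (∀ t ∈ Set.Ioo (0 : ℝ) 1, Ftil η ρ Γ (γ t) = Γ b) ∧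
    (∀ t ∈ Set.Icc (0 : ℝ) 1, γ t = γ 0 + ∫ τ in (0 : ℝ)..t, Ftil η ρ Γ (γ τ)) ∧
    γ 0 = ζ b ∧ γ 1 = ζ b + Γ b := by
  have hdot : ∀ t : ℝ, ∀ j : Fin n,
      η j ⬝ᵥ (γ t - ρ) = η j ⬝ᵥ (ζ b - ρ) + t * (η j ⬝ᵥ Γ b) := by
    intro t j
    rw [hγ]
    have h1 : ζ b + t • Γ b - ρ = (ζ b - ρ) + t • Γ b := by abel
    rw [h1, dotProduct_add, dotProduct_smul, smul_eq_mul]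
  have key : ∀ t ∈ Set.Ioo (0 : ℝ) 1, sgnv η ρ (γ t) = b := by
    intro t ht
    funext j
    have hd := hdot t j
    cases hb : b j with
    | true =>
      have h0 := hζp b j hb
      have hpos : 0 ≤ η j ⬝ᵥ (γ t - ρ) := by
        rw [hd, h0, zero_add]
        exact le_of_lt (mul_pos ht.1 (hev j b))
      show decide (0 ≤ η j ⬝ᵥ (γ t - ρ)) = true
      exact decide_eq_true hpos
    | false =>
      have h0 := hζm b j hb
      have h2 : η j ⬝ᵥ (ζ b - ρ) = -(η j ⬝ᵥ Γ b) := by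
        have h3 : ζ b - ρ = (ζ b + Γ b - ρ) - Γ b := by abel
        rw [h3, dotProduct_sub, h0, zero_sub]
      have hneg : η j ⬝ᵥ (γ t - ρ) < 0 := by
        rw [hd, h2]
        have := hev j b
        nlinarith [ht.2]
      show decide (0 ≤ η j ⬝ᵥ (γ t - ρ)) = false
      exact decide_eq_false (not_le.mpr hneg)
  have keyF : ∀ t ∈ Set.Ioo (0 : ℝ) 1, Ftil η ρ Γ (γ t) = Γ b := by
    intro t ht
    rw [Ftil, key t ht]
  have hγ0 : γ 0 = ζ b := by simp [hγ]
  refine ⟨key, keyF, ?_, hγ0, by simp [hγ]⟩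
  intro t ht
  have hint : (∫ τ in (0 : ℝ)..t, Ftil η ρ Γ (γ τ)) = t • Γ b := by
    have hcong : (∫ τ in (0 : ℝ)..t, Ftil η ρ Γ (γ τ)) =
        ∫ τ in (0 : ℝ)..t, Γ b := by
      apply intervalIntegral.integral_congr_ae
      have hne : (MeasureTheory.volume : MeasureTheory.Measure ℝ) {1} = 0 :=
        MeasureTheory.measure_singleton 1
      filter_upwards [MeasureTheory.measure_eq_zero_iff_ae_notMem.mp hne] with τ hτ hmem
      rw [Set.uIoc_of_le ht.1] at hmem
      have hτ1 : τ < 1 :=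
        lt_of_le_of_ne (le_trans hmem.2 ht.2) (by simpa using hτ)
      exact keyF τ ⟨hmem.1, hτ1⟩
    rw [hcong, intervalIntegral.integral_const, sub_zero]
  rw [hint, hγ0, hγ t]
end

section
/- For every permutation σ of {1,…,n}, the n vectors ζ_{b^σ_0} − ρ, ζ_{b^σ_1} − ρ, …, ζ_{b^σ_{n−1}} − ρ are linearly independent. -/
open Matrix

/-- `b^σ_k ∈ {−1,+1}^n` (encoded `Fin n → Bool`, `true ↔ +1`): the `j`-th entry is
`+1` iff `j ∈ {σ(1),…,σ(k)}`, i.e. iff the (0-indexed) position of `j` under `σ`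
is `< k`.  Thus `b^σ_0 = −𝟙` and `b^σ_n = +𝟙`. -/
def bSig {n : ℕ} (σ : Equiv.Perm (Fin n)) (k : ℕ) : Fin n → Bool :=
  fun j => decide ((σ.symm j : ℕ) < k)

/-- for every permutation `σ` of `{1,…,n}`, the `n` vectors
`ζ_{b^σ_0} − ρ, …, ζ_{b^σ_{n−1}} − ρ` are linearly independent. -/
theorem stmt3 {d n : ℕ} (hd : 1 ≤ d) (hn : 1 ≤ n) (hnd : n ≤ d)
    (ρ : Fin d → ℝ) (η : Fin n → Fin d → ℝ) (hη : LinearIndependent ℝ η)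
    (Γ : (Fin n → Bool) → Fin d → ℝ)
    (hev : ∀ (j : Fin n) (b : Fin n → Bool), 0 < η j ⬝ᵥ Γ b)
    (ζ : (Fin n → Bool) → Fin d → ℝ)
    (hζspan : ∀ b, ζ b - ρ ∈ Submodule.span ℝ (Set.range η))
    (hζp : ∀ b (j : Fin n), b j = true → η j ⬝ᵥ (ζ b - ρ) = 0)
    (hζm : ∀ b (j : Fin n), b j = false → η j ⬝ᵥ (ζ b + Γ b - ρ) = 0)
    (σ : Equiv.Perm (Fin n)) :
    LinearIndependent ℝ (fun k : Fin n => ζ (bSig σ (k : ℕ)) - ρ) := by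
  set v : Fin n → Fin d → ℝ := fun k => ζ (bSig σ (k : ℕ)) - ρ with hv
  set A : Matrix (Fin n) (Fin n) ℝ := Matrix.of fun k m => η (σ k) ⬝ᵥ v m with hA
  have hup : ∀ k m : Fin n, k < m → A k m = 0 := by
    intro k m hkm
    apply hζp
    simp only [bSig, decide_eq_true_eq, Equiv.symm_apply_apply]
    exact hkm
  have hdiag : ∀ k : Fin n, A k k < 0 := by
    intro k
    have hb : bSig σ (k : ℕ) (σ k) = false := by
      simp [bSig]
    have h := hζm (bSig σ (k : ℕ)) (σ k) hb
    have heq : ζ (bSig σ (k : ℕ)) + Γ (bSig σ (k : ℕ)) - ρ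
        = v k + Γ (bSig σ (k : ℕ)) := by
      simp only [hv]; abel
    rw [heq, dotProduct_add] at h
    have := hev (σ k) (bSig σ (k : ℕ))
    simp only [hA, Matrix.of_apply]
    linarith
  have hdet : A.det ≠ 0 := by
    rw [Matrix.det_of_lowerTriangular A hup]
    exact Finset.prod_ne_zero_iff.2 fun k _ => (hdiag k).ne
  rw [Fintype.linearIndependent_iff]
  intro g hg
  have hmv : A.mulVec g = 0 := by
    funext k
    have h0 : η (σ k) ⬝ᵥ (∑ m, g m • v m) = 0 := by rw [hg, dotProduct_zero]
    have hexp : η (σ k) ⬝ᵥ (∑ m, g m • v m) = ∑ m, g m * (η (σ k) ⬝ᵥ v m) := by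
      simp only [dotProduct, Finset.sum_apply, Pi.smul_apply, smul_eq_mul,
        Finset.mul_sum, Finset.sum_mul]
      rw [Finset.sum_comm]
      apply Finset.sum_congr rfl; intro m _
      apply Finset.sum_congr rfl; intro i _
      ring
    rw [hexp] at h0
    show (A *ᵥ g) k = 0
    simp only [Matrix.mulVec, dotProduct, hA, Matrix.of_apply]
    rw [← h0]
    apply Finset.sum_congr rfl; intro m _; rw [mul_comm]; rfl
  have hz := Matrix.eq_zero_of_mulVec_eq_zero hdet hmv
  intro i
  exact congrFun hz i
end

section
/- For every permutation σ of {1,…,n}, the n vectors ζ_{b^σ_1} + Γ(b^σ_1) − ρ, ζ_{b^σ_2} + Γ(b^σ_2) − ρ, …, ζ_{b^σ_n} + Γ(b^σ_n) − ρ are linearly independent. -/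
open Matrix

/-- for every permutation `σ` of `{1,…,n}`, the `n` vectors
`ζ_{b^σ_1} + Γ(b^σ_1) − ρ, …, ζ_{b^σ_n} + Γ(b^σ_n) − ρ` are linearly independent. -/
theorem stmt4 {d n : ℕ} (hd : 1 ≤ d) (hn : 1 ≤ n) (hnd : n ≤ d)
    (ρ : Fin d → ℝ) (η : Fin n → Fin d → ℝ) (hη : LinearIndependent ℝ η)
    (Γ : (Fin n → Bool) → Fin d → ℝ)
    (hev : ∀ (j : Fin n) (b : Fin n → Bool), 0 < η j ⬝ᵥ Γ b)
    (ζ : (Fin n → Bool) → Fin d → ℝ)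
    (hζspan : ∀ b, ζ b - ρ ∈ Submodule.span ℝ (Set.range η))
    (hζp : ∀ b (j : Fin n), b j = true → η j ⬝ᵥ (ζ b - ρ) = 0)
    (hζm : ∀ b (j : Fin n), b j = false → η j ⬝ᵥ (ζ b + Γ b - ρ) = 0)
    (σ : Equiv.Perm (Fin n)) :
    LinearIndependent ℝ (fun k : Fin n => ζ (bSig σ ((k : ℕ) + 1)) + Γ (bSig σ ((k : ℕ) + 1)) - ρ) := by
  set v : Fin n → Fin d → ℝ :=
    fun k => ζ (bSig σ ((k : ℕ) + 1)) + Γ (bSig σ ((k : ℕ) + 1)) - ρ with hv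
  set M : Matrix (Fin n) (Fin n) ℝ := fun j k => η (σ j) ⬝ᵥ v k with hM
  have htri : M.BlockTriangular id := by
    intro j k hkj
    simp only [id] at hkj
    have hb : bSig σ ((k : ℕ) + 1) (σ j) = false := by
      simp [bSig]
      omega
    exact hζm _ (σ j) hb
  have hdiag : ∀ k, 0 < M k k := by
    intro k
    have hb : bSig σ ((k : ℕ) + 1) (σ k) = true := by simp [bSig]
    have h1 := hζp (bSig σ ((k : ℕ) + 1)) (σ k) hb
    have h2 := hev (σ k) (bSig σ ((k : ℕ) + 1))
    have : v k = (ζ (bSig σ ((k : ℕ) + 1)) - ρ) + Γ (bSig σ ((k : ℕ) + 1)) := by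
      simp [hv]; abel
    calc (0:ℝ) < η (σ k) ⬝ᵥ Γ (bSig σ ((k : ℕ) + 1)) := h2
      _ = M k k := by
        simp only [hM, this, dotProduct_add, h1, zero_add]
  have hdet : M.det ≠ 0 := by
    rw [Matrix.det_of_upperTriangular htri]
    exact ne_of_gt (Finset.prod_pos fun k _ => hdiag k)
  rw [Fintype.linearIndependent_iff]
  intro c hc k
  have hmv : M *ᵥ c = 0 := by
    funext j
    have h0 : ∀ i, (∑ l, c l • v l) i = 0 := by rw [hc]; intro i; rfl
    simp only [Matrix.mulVec, dotProduct, hM, Pi.zero_apply]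
    calc ∑ l, (∑ i, η (σ j) i * v l i) * c l
        = ∑ i, η (σ j) i * (∑ l, c l * v l i) := by
          simp_rw [Finset.sum_mul]
          rw [Finset.sum_comm]
          simp_rw [Finset.mul_sum]
          exact Finset.sum_congr rfl fun i _ =>
            Finset.sum_congr rfl fun l _ => by ring
      _ = 0 := by
          apply Finset.sum_eq_zero
          intro i _
          have := h0 i
          simp only [Finset.sum_apply, Pi.smul_apply, smul_eq_mul] at this
          rw [this, mul_zero]
  have := Matrix.eq_zero_of_mulVec_eq_zero hdet hmv
  exact congrFun this k
end

section
/- Fix a permutation σ of {1,…,n} and nonnegative coefficients α_0,…,α_n with Σ_{k=0}^n α_k = 1, and let z = Σ_{k=0}^n α_k ζ_{b^σ_k}. Then there exist times 0 = t_0 ≤ t_1 ≤ ⋯ ≤ t_n ≤ t_{n+1} = 1 and a continuous curve γ : [0,1] → ℝ^d with γ(0) = z such that: γ is a sampled trajectory on [0,1]; on each interval [t_k, t_{k+1}] (k = 0,…,n) the curve γ is affine with constant velocity Γ(b^σ_k); ⟨η_{σ(k)}, γ(t_k) − ρ⟩ = 0 for each k ∈ {1,…,n} (γ crosses the tangent planes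 in the order prescribed by σ); and γ(1) = Σ_{k=0}^n α_k (ζ_{b^σ_k} + Γ(b^σ_k)). In other words, the unit-time sampled flow agrees on the geometric simplex conv{ζ_{b^σ_0},…,ζ_{b^σ_n}} with the piecewise-affine map P determined barycentrically by ζ_{b^σ_k} ↦ ζ_{b^σ_k} + Γ(b^σ_k). -/
open Matrix

private lemma dot_sum {d : ℕ} {ι : Type*} (v : Fin d → ℝ) (s : Finset ι)
    (w : ι → Fin d → ℝ) : v ⬝ᵥ (∑ i ∈ s, w i) = ∑ i ∈ s, v ⬝ᵥ w i := by
  simp only [dotProduct, Finset.sum_apply, Finset.mul_sum]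
  exact Finset.sum_comm

/-- the unit-time sampled flow agrees on the geometric simplex
`conv{ζ_{b^σ_0},…,ζ_{b^σ_n}}` with the piecewise-affine map determined
barycentrically by `ζ_{b^σ_k} ↦ ζ_{b^σ_k} + Γ(b^σ_k)`, via a sampled trajectory
that is piecewise affine with velocities `Γ(b^σ_k)` and crosses the tangent
planes in the order prescribed by `σ`. -/
theorem stmt5 {d n : ℕ} (hd : 1 ≤ d) (hn : 1 ≤ n) (hnd : n ≤ d)
    (ρ : Fin d → ℝ) (η : Fin n → Fin d → ℝ) (hη : LinearIndependent ℝ η)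
    (Γ : (Fin n → Bool) → Fin d → ℝ)
    (hev : ∀ (j : Fin n) (b : Fin n → Bool), 0 < η j ⬝ᵥ Γ b)
    (ζ : (Fin n → Bool) → Fin d → ℝ)
    (hζspan : ∀ b, ζ b - ρ ∈ Submodule.span ℝ (Set.range η))
    (hζp : ∀ b (j : Fin n), b j = true → η j ⬝ᵥ (ζ b - ρ) = 0)
    (hζm : ∀ b (j : Fin n), b j = false → η j ⬝ᵥ (ζ b + Γ b - ρ) = 0)
    (σ : Equiv.Perm (Fin n))
    (α : Fin (n + 1) → ℝ) (hα : ∀ k, 0 ≤ α k) (hα1 : ∑ k, α k = 1)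
    (z : Fin d → ℝ) (hz : z = ∑ k : Fin (n + 1), α k • ζ (bSig σ (k : ℕ))) :
    ∃ (t : ℕ → ℝ) (γ : ℝ → Fin d → ℝ),
      t 0 = 0 ∧ t (n + 1) = 1 ∧ (∀ k ≤ n, t k ≤ t (k + 1)) ∧
      Continuous γ ∧ γ 0 = z ∧
      -- γ is a sampled trajectory on [0,1]
      (∀ u ∈ Set.Icc (0 : ℝ) 1, γ u = γ 0 + ∫ τ in (0 : ℝ)..u, Ftil η ρ Γ (γ τ)) ∧
      -- γ is affine with constant velocity Γ(b^σ_k) on [t_k, t_{k+1}]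
      (∀ k ≤ n, ∀ u ∈ Set.Icc (t k) (t (k + 1)),
        γ u = γ (t k) + (u - t k) • Γ (bSig σ k)) ∧
      -- γ crosses the tangent planes in the order prescribed by σ
      (∀ k : Fin n, η (σ k) ⬝ᵥ (γ (t ((k : ℕ) + 1)) - ρ) = 0) ∧
      γ 1 = ∑ k : Fin (n + 1), α k • (ζ (bSig σ (k : ℕ)) + Γ (bSig σ (k : ℕ))) := by
  classical
  set t : ℕ → ℝ := fun k => ∑ i : Fin (n+1), if (i : ℕ) < k then α i else 0 with htdef
  set c : ℕ → ℝ → ℝ := fun k u => max (min u (t (k+1))) (t k) - t k with hcdef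
  set γ : ℝ → Fin d → ℝ :=
    fun u => z + ∑ i : Fin (n+1), c (i : ℕ) u • Γ (bSig σ (i : ℕ)) with hγdef
  -- basic facts about t
  have ht0 : t 0 = 0 := by simp [htdef]
  have hmono : Monotone t := by
    apply monotone_nat_of_le_succ
    intro k
    apply Finset.sum_le_sum
    intro i _
    by_cases h : (i : ℕ) < k
    · simp [h, Nat.lt_succ_of_lt h]
    · by_cases h2 : (i : ℕ) < k + 1 <;> simp [h, h2, hα i]
  have ht1 : ∀ k, n + 1 ≤ k → t k = 1 := by
    intro k hk
    rw [htdef, ← hα1]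
    exact Finset.sum_congr rfl fun i _ => by simp [lt_of_lt_of_le i.isLt hk]
  have hinc : ∀ i : Fin (n+1), t ((i : ℕ) + 1) - t (i : ℕ) = α i := by
    intro i
    rw [htdef]
    simp only
    rw [← Finset.sum_sub_distrib]
    have h1 : ∀ j : Fin (n+1),
        ((if (j : ℕ) < (i : ℕ) + 1 then α j else 0) - (if (j : ℕ) < (i : ℕ) then α j else 0))
          = if j = i then α j else 0 := by
      intro j
      rcases lt_trichotomy (j : ℕ) (i : ℕ) with h | h | h
      · have hne : j ≠ i := Fin.ne_of_val_ne (by omega)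
        simp [h, Nat.lt_succ_of_lt h, hne]
      · have heq : j = i := Fin.ext h
        simp [heq]
      · have h2 : ¬ (j : ℕ) < (i : ℕ) + 1 := by omega
        have h3 : ¬ (j : ℕ) < (i : ℕ) := by omega
        have hne : j ≠ i := Fin.ne_of_val_ne (by omega)
        simp [h2, h3, hne]
    rw [Finset.sum_congr rfl fun j _ => h1 j]
    simp
  -- value of γ at the breakpoints
  have hγt : ∀ k : ℕ, γ (t k)
      = z + ∑ i : Fin (n+1), (if (i : ℕ) < k then α i else 0) • Γ (bSig σ (i : ℕ)) := by
    intro k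
    simp only [hγdef]
    congr 1
    apply Finset.sum_congr rfl
    intro i _
    congr 1
    by_cases h : (i : ℕ) < k
    · have h1 : t ((i : ℕ) + 1) ≤ t k := hmono h
      have h2 : t (i : ℕ) ≤ t ((i : ℕ) + 1) := hmono (Nat.le_succ _)
      simp only [hcdef]
      rw [min_eq_right h1, max_eq_left h2, hinc i]
      simp [h]
    · have h1 : t k ≤ t (i : ℕ) := hmono (not_lt.1 h)
      have h2 : t k ≤ t ((i : ℕ) + 1) := hmono (Nat.le_succ_of_le (not_lt.1 h))
      simp only [hcdef]
      rw [min_eq_left h2, max_eq_right h1]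
      simp [h]
  -- affine formula on each interval
  have haff : ∀ k, k ≤ n → ∀ u, t k ≤ u → u ≤ t (k+1) →
      γ u = γ (t k) + (u - t k) • Γ (bSig σ k) := by
    intro k hk u h1 h2
    have hkn : k < n + 1 := by omega
    set K : Fin (n+1) := ⟨k, hkn⟩ with hK
    have hKv : (K : ℕ) = k := rfl
    have hsum : ∀ i : Fin (n+1), c (i : ℕ) u
        = (if (i : ℕ) < k then α i else 0) + (if i = K then u - t k else 0) := by
      intro i
      rcases lt_trichotomy (i : ℕ) k with h | h | h
      · have h1' : t ((i : ℕ) + 1) ≤ t k := hmono h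
        have h2' : t (i : ℕ) ≤ t ((i : ℕ) + 1) := hmono (Nat.le_succ _)
        have hne : i ≠ K := Fin.ne_of_val_ne (by omega)
        have hval : c (i : ℕ) u = α i := by
          simp only [hcdef]
          rw [min_eq_right (le_trans h1' h1), max_eq_left h2', hinc i]
        rw [hval]
        simp [h, hne]
      · have he : i = K := Fin.ext (by rw [hKv]; exact h)
        have hval : c (i : ℕ) u = u - t k := by
          simp only [hcdef, he, hKv]
          rw [min_eq_left h2, max_eq_left h1]
        rw [hval, he]
        simp [hKv]
      · have h1' : t (k+1) ≤ t (i : ℕ) := hmono h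
        have hne : i ≠ K := Fin.ne_of_val_ne (by omega)
        have hval : c (i : ℕ) u = 0 := by
          simp only [hcdef]
          rw [min_eq_left (le_trans (le_trans h2 h1') (hmono (Nat.le_succ _))),
            max_eq_right (le_trans h2 h1')]
          ring
        rw [hval]
        simp [Nat.not_lt.2 h.le, hne]
    rw [hγt k]
    simp only [hγdef]
    rw [Finset.sum_congr rfl fun (i : Fin (n+1)) _ => by rw [hsum i, add_smul]]
    rw [Finset.sum_add_distrib]
    have hlast : (∑ i : Fin (n+1), (if i = K then u - t k else 0) • Γ (bSig σ (i : ℕ)))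
        = (u - t k) • Γ (bSig σ k) := by
      have hterm : ∀ i : Fin (n+1), (if i = K then u - t k else 0) • Γ (bSig σ (i : ℕ))
          = (if i = K then (u - t k) • Γ (bSig σ (i : ℕ)) else 0) := by
        intro i
        split_ifs <;> simp
      rw [Finset.sum_congr rfl fun (i : Fin (n+1)) _ => hterm i]
      rw [Finset.sum_ite_eq' Finset.univ K fun i => (u - t k) • Γ (bSig σ (i : ℕ))]
      simp [hKv]
    rw [hlast]
    abel
  -- continuity
  have hcont : Continuous γ := by
    simp only [hγdef]
    apply continuous_const.add
    apply continuous_finset_sum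
    intro i _
    simp only [hcdef]
    exact (((continuous_id.min continuous_const).max continuous_const).sub
      continuous_const).smul continuous_const
  have hγ0 : γ 0 = z := by
    have := hγt 0
    rw [ht0] at this
    simpa using this
  -- dot product expansion of differences
  have hDexp : ∀ (j : Fin n) (x y : ℝ),
      η j ⬝ᵥ (γ y - ρ) - η j ⬝ᵥ (γ x - ρ)
        = ∑ i : Fin (n+1), (c (i : ℕ) y - c (i : ℕ) x) * (η j ⬝ᵥ Γ (bSig σ (i : ℕ))) := by
    intro j x y
    rw [← dotProduct_sub]
    have hγs : (γ y - ρ) - (γ x - ρ)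
        = ∑ i : Fin (n+1), (c (i : ℕ) y - c (i : ℕ) x) • Γ (bSig σ (i : ℕ)) := by
      simp only [hγdef]
      rw [Finset.sum_congr rfl fun (i : Fin (n+1)) _ =>
        sub_smul (c (i : ℕ) y) (c (i : ℕ) x) (Γ (bSig σ (i : ℕ)))]
      rw [Finset.sum_sub_distrib]
      abel
    rw [hγs, dot_sum]
    exact Finset.sum_congr rfl fun (i : Fin (n+1)) _ => by
      rw [dotProduct_smul]; simp [smul_eq_mul]
  have hcmono : ∀ (i : ℕ) {x y : ℝ}, x ≤ y → c i x ≤ c i y := by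
    intro i x y h
    simp only [hcdef]
    exact sub_le_sub_right (max_le_max (min_le_min h le_rfl) le_rfl) _
  have hDmono : ∀ (j : Fin n) {x y : ℝ}, x ≤ y →
      η j ⬝ᵥ (γ x - ρ) ≤ η j ⬝ᵥ (γ y - ρ) := by
    intro j x y h
    have h1 := hDexp j x y
    have h2 : (0:ℝ) ≤ ∑ i : Fin (n+1),
        (c (i : ℕ) y - c (i : ℕ) x) * (η j ⬝ᵥ Γ (bSig σ (i : ℕ))) :=
      Finset.sum_nonneg fun i _ =>
        mul_nonneg (sub_nonneg.2 (hcmono _ h)) (hev j _).le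
    linarith
  -- value of γ(t k) - ρ as a sum
  have hzρ : z - ρ = ∑ m : Fin (n+1), α m • (ζ (bSig σ (m : ℕ)) - ρ) := by
    rw [hz]
    rw [Finset.sum_congr rfl fun (m : Fin (n+1)) _ =>
      smul_sub (α m) (ζ (bSig σ (m : ℕ))) ρ]
    rw [Finset.sum_sub_distrib, ← Finset.sum_smul, hα1, one_smul]
  have hDt : ∀ (j : Fin n) (k : ℕ), η j ⬝ᵥ (γ (t k) - ρ)
      = ∑ m : Fin (n+1), (α m * (η j ⬝ᵥ (ζ (bSig σ (m : ℕ)) - ρ))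
          + (if (m : ℕ) < k then α m else 0) * (η j ⬝ᵥ Γ (bSig σ (m : ℕ)))) := by
    intro j k
    have hv : γ (t k) - ρ = ∑ m : Fin (n+1), (α m • (ζ (bSig σ (m : ℕ)) - ρ)
        + (if (m : ℕ) < k then α m else 0) • Γ (bSig σ (m : ℕ))) := by
      rw [Finset.sum_add_distrib, ← hzρ, hγt k]
      abel
    rw [hv, dot_sum]
    refine Finset.sum_congr rfl fun (m : Fin (n+1)) _ => ?_
    rw [dotProduct_add, dotProduct_smul, dotProduct_smul]
    simp [smul_eq_mul]
  -- crossing values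
  have hcross0 : ∀ j : Fin n, η j ⬝ᵥ (γ (t ((σ.symm j : ℕ) + 1)) - ρ) = 0 := by
    intro j
    rw [hDt j ((σ.symm j : ℕ) + 1)]
    apply Finset.sum_eq_zero
    intro m _
    by_cases h : (m : ℕ) < (σ.symm j : ℕ) + 1
    · have hb : bSig σ (m : ℕ) j = false := by
        simp [bSig]; omega
      have := hζm (bSig σ (m : ℕ)) j hb
      have h2 : η j ⬝ᵥ (ζ (bSig σ (m : ℕ)) - ρ) = - (η j ⬝ᵥ Γ (bSig σ (m : ℕ))) := by
        have h3 : ζ (bSig σ (m : ℕ)) + Γ (bSig σ (m : ℕ)) - ρ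
            = (ζ (bSig σ (m : ℕ)) - ρ) + Γ (bSig σ (m : ℕ)) := by abel
        rw [h3, dotProduct_add] at this
        linarith
      simp [h, h2]
    · have hb : bSig σ (m : ℕ) j = true := by
        simp [bSig]; omega
      rw [hζp (bSig σ (m : ℕ)) j hb]
      simp [h]
  -- strict negativity before crossing
  have hneg : ∀ (j : Fin n) (k : ℕ), k ≤ (σ.symm j : ℕ) → ∀ τ, t k < τ → τ < t (k+1) →
      η j ⬝ᵥ (γ τ - ρ) < 0 := by
    intro j k hkl τ h1 h2
    set L : ℕ := (σ.symm j : ℕ) + 1 with hL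
    have hτL : τ ≤ t L := le_trans h2.le (hmono (by omega))
    have hd := hDexp j τ (t L)
    have hkn1 : k < n + 1 := by have := (σ.symm j).isLt; omega
    have hpos : 0 < ∑ i : Fin (n+1),
        (c (i : ℕ) (t L) - c (i : ℕ) τ) * (η j ⬝ᵥ Γ (bSig σ (i : ℕ))) := by
      apply Finset.sum_pos'
      · intro i _
        exact mul_nonneg (sub_nonneg.2 (hcmono _ hτL)) (hev j _).le
      · refine ⟨⟨k, hkn1⟩, Finset.mem_univ _, ?_⟩
        have hck1 : c k (t L) = t (k+1) - t k := by
          simp only [hcdef]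
          rw [min_eq_right (hmono (by omega : k + 1 ≤ L)),
            max_eq_left (hmono (Nat.le_succ k))]
        have hck2 : c k τ = τ - t k := by
          simp only [hcdef]
          rw [min_eq_left h2.le, max_eq_left h1.le]
        simp only
        rw [hck1, hck2]
        have : (0:ℝ) < t (k+1) - τ := by linarith
        exact mul_pos (by linarith) (hev j _)
    have h0 := hcross0 j
    rw [← hL] at h0
    linarith
  have hposs : ∀ (j : Fin n) (k : ℕ), (σ.symm j : ℕ) < k → ∀ τ, t k ≤ τ →
      0 ≤ η j ⬝ᵥ (γ τ - ρ) := by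
    intro j k hlk τ hτ
    have h0 := hcross0 j
    have : t ((σ.symm j : ℕ) + 1) ≤ τ := le_trans (hmono (by omega)) hτ
    have := hDmono j this
    linarith
  -- the sign vector on open intervals
  have hstep : ∀ k, k ≤ n → ∀ τ, t k < τ → τ < t (k+1) →
      sgnv η ρ (γ τ) = bSig σ k := by
    intro k hk τ h1 h2
    funext j
    simp only [sgnv, bSig]
    rw [decide_eq_decide]
    constructor
    · intro h
      by_contra hc
      have := hneg j k (not_lt.1 hc) τ h1 h2
      linarith
    · intro h
      exact hposs j k h τ h1.le
  -- finding the interval containing a point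
  have hfind : ∀ x : ℝ, 0 < x → x < 1 → x ∉ Set.range t →
      ∃ k ≤ n, t k < x ∧ x < t (k+1) := by
    intro x hx0 hx1 hxs
    set A := (Finset.range (n+1)).filter (fun i => t i < x) with hA
    have h0A : (0 : ℕ) ∈ A := by
      simp [hA, Finset.mem_filter, Finset.mem_range, ht0, hx0]
    have hAne : A.Nonempty := ⟨0, h0A⟩
    set k := A.max' hAne with hk
    have hkA : k ∈ A := A.max'_mem hAne
    have hkn : k ≤ n := by
      have := (Finset.mem_filter.1 hkA).1
      rw [Finset.mem_range] at this
      omega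
    have hkx : t k < x := (Finset.mem_filter.1 hkA).2
    refine ⟨k, hkn, hkx, ?_⟩
    by_contra h
    push_neg at h
    have hne : t (k+1) ≠ x := fun he => hxs ⟨k+1, he⟩
    have hlt : t (k+1) < x := lt_of_le_of_ne h hne
    rcases Nat.lt_or_ge k n with hkn' | hkn'
    · have hmem : k + 1 ∈ A := by
        rw [hA, Finset.mem_filter, Finset.mem_range]
        exact ⟨by omega, hlt⟩
      have := A.le_max' _ hmem
      omega
    · have hkeq : k = n := le_antisymm hkn hkn'
      rw [hkeq, ht1 (n+1) le_rfl] at hlt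
      linarith
  -- measurability of the integrand
  have hmeas : Measurable fun τ => Ftil η ρ Γ (γ τ) := by
    have hg : @Measurable ℝ (Fin n → Bool) _ ⊤ (fun τ => sgnv η ρ (γ τ)) := by
      refine @measurable_to_countable (Fin n → Bool) ℝ ⊤ _ _ _ (fun y => ?_)
      have hset : (fun τ => sgnv η ρ (γ τ)) ⁻¹' {sgnv η ρ (γ y)}
          = ⋂ j : Fin n, {τ : ℝ | sgnv η ρ (γ τ) j = sgnv η ρ (γ y) j} := by
        ext τ
        simp [Set.mem_iInter, funext_iff]
      rw [hset]
      apply MeasurableSet.iInter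
      intro j
      have hcont' : Continuous fun τ => η j ⬝ᵥ (γ τ - ρ) := by
        have : Continuous fun τ => γ τ - ρ := hcont.sub continuous_const
        have h2 : Continuous fun v : Fin d → ℝ => η j ⬝ᵥ v := by
          simp only [dotProduct]
          exact continuous_finset_sum _ fun x _ => continuous_const.mul (continuous_apply x)
        exact h2.comp this
      cases hb : sgnv η ρ (γ y) j
      · have : {τ : ℝ | sgnv η ρ (γ τ) j = false}
            = (fun τ => η j ⬝ᵥ (γ τ - ρ)) ⁻¹' (Set.Iio 0) := by
          ext τ
          simp [sgnv, not_le]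
        rw [this]
        exact hcont'.measurable measurableSet_Iio
      · have : {τ : ℝ | sgnv η ρ (γ τ) j = true}
            = (fun τ => η j ⬝ᵥ (γ τ - ρ)) ⁻¹' (Set.Ici 0) := by
          ext τ
          simp [sgnv]
        rw [this]
        exact hcont'.measurable measurableSet_Ici
    exact Measurable.comp (measurable_from_top (f := Γ)) hg
  refine ⟨t, γ, ht0, ht1 (n+1) le_rfl, fun k _ => hmono (Nat.le_succ k), hcont, hγ0,
    ?_, ?_, ?_, ?_⟩
  · -- sampled trajectory
    rintro u ⟨hu0, hu1⟩
    have Hc : ContinuousOn γ (Set.uIcc 0 u) := hcont.continuousOn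
    have Hd : ∀ x ∈ Set.Ioo (0 ⊓ u) (0 ⊔ u) \ Set.range t,
        HasDerivAt γ (Ftil η ρ Γ (γ x)) x := by
      rw [min_eq_left hu0, max_eq_right hu0]
      rintro x ⟨⟨hx0, hxu⟩, hxs⟩
      obtain ⟨k, hk, hx1, hx2⟩ := hfind x hx0 (lt_of_lt_of_le hxu hu1) hxs
      have heq : ∀ᶠ y in nhds x, γ y = γ (t k) + (y - t k) • Γ (bSig σ k) := by
        filter_upwards [isOpen_Ioo.mem_nhds (⟨hx1, hx2⟩ : x ∈ Set.Ioo (t k) (t (k+1)))]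
          with y hy
        exact haff k hk y hy.1.le hy.2.le
      have hA : HasDerivAt (fun y : ℝ => γ (t k) + (y - t k) • Γ (bSig σ k))
          (Γ (bSig σ k)) x := by
        simpa using
          (((hasDerivAt_id x).sub_const (t k)).smul_const (Γ (bSig σ k))).const_add (γ (t k))
      have hB : HasDerivAt γ (Γ (bSig σ k)) x := hA.congr_of_eventuallyEq heq
      have hF : Ftil η ρ Γ (γ x) = Γ (bSig σ k) := by
        rw [Ftil, hstep k hk x hx1 hx2]
      rw [hF]
      exact hB
    have Hi : IntervalIntegrable (fun τ => Ftil η ρ Γ (γ τ)) MeasureTheory.volume 0 u := by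
      rw [intervalIntegrable_iff]
      have hCle : ∀ τ : ℝ, ‖Ftil η ρ Γ (γ τ)‖
          ≤ Finset.univ.sup' Finset.univ_nonempty (fun b : Fin n → Bool => ‖Γ b‖) := by
        intro τ
        exact Finset.le_sup' (fun b : Fin n → Bool => ‖Γ b‖) (Finset.mem_univ _)
      apply MeasureTheory.Integrable.mono'
        (g := fun _ => Finset.univ.sup' Finset.univ_nonempty (fun b : Fin n → Bool => ‖Γ b‖))
      · exact MeasureTheory.integrableOn_const measure_Ioc_lt_top.ne
      · exact hmeas.aestronglyMeasurable.restrict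
      · exact MeasureTheory.ae_of_all _ fun τ => hCle τ
    have key := MeasureTheory.integral_eq_of_hasDerivAt_off_countable γ
      (fun τ => Ftil η ρ Γ (γ τ)) (Set.countable_range t) Hc Hd Hi
    rw [key]
    abel
  · -- affine on intervals
    rintro k hk u ⟨h1, h2⟩
    exact haff k hk u h1 h2
  · -- crossing
    intro k
    have := hcross0 (σ k)
    simpa using this
  · -- endpoint
    have h1 : (1:ℝ) = t (n+1) := (ht1 (n+1) le_rfl).symm
    rw [h1, hγt (n+1)]
    have h2 : ∀ i : Fin (n+1), (if (i : ℕ) < n + 1 then α i else 0) = α i :=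
      fun i => by simp [i.isLt]
    rw [Finset.sum_congr rfl fun (i : Fin (n+1)) _ => by rw [h2 i]]
    rw [hz]
    rw [Finset.sum_congr rfl fun (m : Fin (n+1)) _ =>
      smul_add (α m) (ζ (bSig σ (m : ℕ))) (Γ (bSig σ (m : ℕ)))]
    rw [Finset.sum_add_distrib]
end

section
/- Every saltation matrix maps the initial limiting vector field value to the final one: for every permutation σ of {1,…,n}, M_σ Γ(−𝟙) = Γ(+𝟙), where −𝟙 and +𝟙 denote the all-(−1) and all-(+1) sign vectors. -/
open Matrix

/-- The saltation matrix `M_σ = A_{n−1} ⋯ A_1 A_0` where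
`A_k = I_d + (Γ(b^σ_{k+1}) − Γ(b^σ_k)) η_{σ(k+1)}^⊤ / ⟨η_{σ(k+1)}, Γ(b^σ_k)⟩`
(with the `k = 0` factor applied first, i.e. rightmost; `σ(k+1)` in 1-indexed
notation is `σ k` for `k : Fin n`). -/
noncomputable def saltation {d n : ℕ} (η : Fin n → Fin d → ℝ)
    (Γ : (Fin n → Bool) → Fin d → ℝ) (σ : Equiv.Perm (Fin n)) :
    Matrix (Fin d) (Fin d) ℝ :=
  ((List.ofFn (fun k : Fin n =>
      (1 : Matrix (Fin d) (Fin d) ℝ) +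
        (η (σ k) ⬝ᵥ Γ (bSig σ (k : ℕ)))⁻¹ •
          vecMulVec (Γ (bSig σ ((k : ℕ) + 1)) - Γ (bSig σ (k : ℕ))) (η (σ k)))).reverse).prod


lemma vecMulVec_mulVec' {d : ℕ} (u w v : Fin d → ℝ) :
    (vecMulVec u w).mulVec v = (w ⬝ᵥ v) • u := by
  funext i
  simp [mulVec, dotProduct, vecMulVec_apply, Finset.mul_sum, mul_comm, mul_assoc, mul_left_comm]

lemma chain {d n : ℕ} (f : Fin n → Matrix (Fin d) (Fin d) ℝ) (g : ℕ → Fin d → ℝ)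
    (hf : ∀ k : Fin n, (f k).mulVec (g k) = g (k + 1)) :
    ∀ k ≤ n, (((List.ofFn f).take k).reverse.prod).mulVec (g 0) = g k := by
  intro k hk
  induction k with
  | zero => simp
  | succ k ih =>
    have hk' : k < n := hk
    rw [List.take_succ, List.getElem?_ofFn]
    simp only [List.ofFnNthVal, dif_pos hk']
    simp only [Option.toList_some, List.reverse_append, List.reverse_singleton,
      List.singleton_append, List.prod_cons, ← mulVec_mulVec, ih (le_of_lt hk')]
    exact hf ⟨k, hk'⟩

/-- every saltation matrix maps the initial limiting vector field
value `Γ(−𝟙)` to the final one `Γ(+𝟙)` (here `−𝟙 = fun _ => false`,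
`+𝟙 = fun _ => true`). -/
theorem stmt8 {d n : ℕ} (hd : 1 ≤ d) (hn : 1 ≤ n) (hnd : n ≤ d)
    (ρ : Fin d → ℝ) (η : Fin n → Fin d → ℝ) (hη : LinearIndependent ℝ η)
    (Γ : (Fin n → Bool) → Fin d → ℝ)
    (hev : ∀ (j : Fin n) (b : Fin n → Bool), 0 < η j ⬝ᵥ Γ b)
    (σ : Equiv.Perm (Fin n)) :
    (saltation η Γ σ).mulVec (Γ (fun _ => false)) = Γ (fun _ => true) := by
  have key := chain (fun k : Fin n =>
      (1 : Matrix (Fin d) (Fin d) ℝ) +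
        (η (σ k) ⬝ᵥ Γ (bSig σ (k : ℕ)))⁻¹ •
          vecMulVec (Γ (bSig σ ((k : ℕ) + 1)) - Γ (bSig σ (k : ℕ))) (η (σ k)))
    (fun k => Γ (bSig σ k)) ?_ n le_rfl
  · have h0 : bSig σ 0 = fun _ => false := by funext j; simp [bSig]
    have hn' : bSig σ n = fun _ => true := by
      funext j; simp [bSig, (σ.symm j).isLt]
    rw [List.take_of_length_le (by simp)] at key
    rw [saltation]
    simp only [h0, hn'] at key
    exact key
  · intro k
    set c := η (σ k) ⬝ᵥ Γ (bSig σ (k : ℕ)) with hc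
    rw [add_mulVec, one_mulVec, smul_mulVec, vecMulVec_mulVec', ← hc, smul_smul,
      inv_mul_cancel₀ (hev (σ k) _).ne', one_smul, add_sub_cancel]
end

section
/- The saltation matrix realizes the triangulated first-order flow approximation on the vertices of its simplex: for every permutation σ of {1,…,n} and every k ∈ {0,…,n}, M_σ (ζ_{b^σ_k} − ρ) = ζ_{b^σ_k} + Γ(b^σ_k) − ρ − Γ(+𝟙). -/
open Matrix

lemma step_mulVec {d : ℕ} (c : ℝ) (u w v : Fin d → ℝ) :
    ((1 : Matrix (Fin d) (Fin d) ℝ) + c • vecMulVec u w).mulVec v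
      = v + (c * (w ⬝ᵥ v)) • u := by
  rw [add_mulVec, one_mulVec, smul_mulVec, vecMulVec_mulVec', smul_smul]

/-- the saltation matrix realizes the triangulated first-order flow
approximation on the vertices of its simplex:
`M_σ (ζ_{b^σ_k} − ρ) = ζ_{b^σ_k} + Γ(b^σ_k) − ρ − Γ(+𝟙)` for `k = 0,…,n`. -/
theorem stmt9 {d n : ℕ} (hd : 1 ≤ d) (hn : 1 ≤ n) (hnd : n ≤ d)
    (ρ : Fin d → ℝ) (η : Fin n → Fin d → ℝ) (hη : LinearIndependent ℝ η)
    (Γ : (Fin n → Bool) → Fin d → ℝ)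
    (hev : ∀ (j : Fin n) (b : Fin n → Bool), 0 < η j ⬝ᵥ Γ b)
    (ζ : (Fin n → Bool) → Fin d → ℝ)
    (hζspan : ∀ b, ζ b - ρ ∈ Submodule.span ℝ (Set.range η))
    (hζp : ∀ b (j : Fin n), b j = true → η j ⬝ᵥ (ζ b - ρ) = 0)
    (hζm : ∀ b (j : Fin n), b j = false → η j ⬝ᵥ (ζ b + Γ b - ρ) = 0)
    (σ : Equiv.Perm (Fin n)) :
    ∀ k ≤ n, (saltation η Γ σ).mulVec (ζ (bSig σ k) - ρ) =
      ζ (bSig σ k) + Γ (bSig σ k) - ρ - Γ (fun _ => true) := by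

  intro k hk
  set f : Fin n → Matrix (Fin d) (Fin d) ℝ := fun k =>
      (1 : Matrix (Fin d) (Fin d) ℝ) +
        (η (σ k) ⬝ᵥ Γ (bSig σ (k : ℕ)))⁻¹ •
          vecMulVec (Γ (bSig σ ((k : ℕ) + 1)) - Γ (bSig σ (k : ℕ))) (η (σ k)) with hf
  have key : ∀ m ≤ n, (((List.ofFn f).take m).reverse.prod).mulVec (ζ (bSig σ k) - ρ)
      = ζ (bSig σ k) + Γ (bSig σ k) - Γ (bSig σ (max m k)) - ρ := by
    intro m hm
    induction m with
    | zero =>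
        simp only [List.take_zero, List.reverse_nil, List.prod_nil, one_mulVec,
          Nat.max_eq_right (Nat.zero_le k)]
        abel
    | succ m ih =>
        have hmn : m < n := hm
        have ih' := ih (le_of_lt hmn)
        have hget : (List.ofFn f)[m]? = some (f ⟨m, hmn⟩) := by
          rw [List.getElem?_eq_getElem (by simpa using hmn), List.getElem_ofFn]
        rw [List.take_succ, hget]
        simp only [Option.toList_some, List.reverse_append, List.reverse_singleton,
          List.singleton_append, List.prod_cons, ← Matrix.mulVec_mulVec, ih']
        set j : Fin n := σ ⟨m, hmn⟩ with hj
        have hsymm : (σ.symm j : ℕ) = m := by rw [hj, Equiv.symm_apply_apply]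
        rcases lt_or_ge m k with hmk | hkm
        · -- m < k : factor acts trivially
          have hmaxm : max m k = k := Nat.max_eq_right (le_of_lt hmk)
          have hmaxm1 : max (m + 1) k = k := Nat.max_eq_right hmk
          have hb : bSig σ k j = true := by simp [bSig, hsymm, hmk]
          have hdot : η j ⬝ᵥ (ζ (bSig σ k) - ρ) = 0 := hζp _ _ hb
          have hv : ζ (bSig σ k) + Γ (bSig σ k) - Γ (bSig σ (max m k)) - ρ
              = ζ (bSig σ k) - ρ := by rw [hmaxm]; abel
          rw [hv, hmaxm1, hf]
          rw [step_mulVec, hdot, mul_zero, zero_smul, add_zero]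
          abel
        · -- k ≤ m
          have hmaxm : max m k = m := Nat.max_eq_left hkm
          have hmaxm1 : max (m + 1) k = m + 1 := Nat.max_eq_left (le_trans hkm (Nat.le_succ m))
          have hb : bSig σ k j = false := by simp [bSig, hsymm]; omega
          have hdot0 : η j ⬝ᵥ (ζ (bSig σ k) + Γ (bSig σ k) - ρ) = 0 := hζm _ _ hb
          have hc : η j ⬝ᵥ Γ (bSig σ m) ≠ 0 := ne_of_gt (hev _ _)
          have hdot : η j ⬝ᵥ (ζ (bSig σ k) + Γ (bSig σ k) - Γ (bSig σ (max m k)) - ρ)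
              = -(η j ⬝ᵥ Γ (bSig σ m)) := by
            rw [hmaxm]
            have : ζ (bSig σ k) + Γ (bSig σ k) - Γ (bSig σ m) - ρ
                = (ζ (bSig σ k) + Γ (bSig σ k) - ρ) - Γ (bSig σ m) := by abel
            rw [this, dotProduct_sub, hdot0, zero_sub]
          rw [hmaxm1, hf]
          rw [step_mulVec, hdot, mul_neg, inv_mul_cancel₀ hc]
          rw [hmaxm]
          ext i
          simp only [Pi.add_apply, Pi.sub_apply, Pi.smul_apply, smul_eq_mul]
          ring
  have hfull := key n le_rfl
  have htake : (List.ofFn f).take n = List.ofFn f := by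
    rw [List.take_of_length_le]; simp
  have hbn : bSig σ (max n k) = fun _ => true := by
    funext j
    simp [bSig, Nat.max_eq_left hk, j.isLt]
  rw [saltation, ← hf, ← htake, key n le_rfl, hbn]
  abel
end

section
/- Every saltation matrix M_σ is invertible, with positive determinant given by the telescoping formula det M_σ = Π_{k=0}^{n−1} ⟨η_{σ(k+1)}, Γ(b^σ_{k+1})⟩ / ⟨η_{σ(k+1)}, Γ(b^σ_k)⟩ > 0. -/
open Matrix

lemma smul_vecMulVec' {d : ℕ} (c : ℝ) (u v : Fin d → ℝ) :
    c • vecMulVec u v = vecMulVec (c • u) v := by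
  ext i j; simp [vecMulVec, mul_assoc]

lemma det_factor {d : ℕ} (c : ℝ) (u v : Fin d → ℝ) :
    ((1 : Matrix (Fin d) (Fin d) ℝ) + c • vecMulVec u v).det = 1 + c * (v ⬝ᵥ u) := by
  rw [smul_vecMulVec', vecMulVec_eq Unit, det_one_add_replicateCol_mul_replicateRow, dotProduct_smul,
    smul_eq_mul]

/-- every saltation matrix is invertible with positive determinant
given by the telescoping formula
`det M_σ = Π_{k=0}^{n−1} ⟨η_{σ(k+1)}, Γ(b^σ_{k+1})⟩ / ⟨η_{σ(k+1)}, Γ(b^σ_k)⟩ > 0`. -/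
theorem stmt11 {d n : ℕ} (hd : 1 ≤ d) (hn : 1 ≤ n) (hnd : n ≤ d)
    (ρ : Fin d → ℝ) (η : Fin n → Fin d → ℝ) (hη : LinearIndependent ℝ η)
    (Γ : (Fin n → Bool) → Fin d → ℝ)
    (hev : ∀ (j : Fin n) (b : Fin n → Bool), 0 < η j ⬝ᵥ Γ b)
    (σ : Equiv.Perm (Fin n)) :
    IsUnit (saltation η Γ σ) ∧
    (saltation η Γ σ).det =
      ∏ k : Fin n,
        (η (σ k) ⬝ᵥ Γ (bSig σ ((k : ℕ) + 1))) / (η (σ k) ⬝ᵥ Γ (bSig σ (k : ℕ))) ∧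
    0 < (saltation η Γ σ).det := by
  have hdet : (saltation η Γ σ).det =
      ∏ k : Fin n,
        (η (σ k) ⬝ᵥ Γ (bSig σ ((k : ℕ) + 1))) / (η (σ k) ⬝ᵥ Γ (bSig σ (k : ℕ))) := by
    have hlp : ∀ l : List (Matrix (Fin d) (Fin d) ℝ),
        l.prod.det = (l.map Matrix.det).prod := fun l => by
      simpa using map_list_prod (Matrix.detMonoidHom) l
    rw [saltation, hlp, List.map_reverse, List.prod_reverse,
      ← List.prod_ofFn (f := fun k : Fin n =>
        (η (σ k) ⬝ᵥ Γ (bSig σ ((k : ℕ) + 1))) / (η (σ k) ⬝ᵥ Γ (bSig σ (k : ℕ))))]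
    congr 1
    rw [List.map_ofFn]
    congr 1
    funext k
    have hpos := hev (σ k) (bSig σ (k : ℕ))
    simp only [Function.comp_apply, det_factor, dotProduct_sub]
    field_simp
    ring
  have hpos : 0 < (saltation η Γ σ).det := by
    rw [hdet]
    exact Finset.prod_pos fun k _ => div_pos (hev _ _) (hev _ _)
  exact ⟨(Matrix.isUnit_iff_isUnit_det _).mpr (isUnit_iff_ne_zero.mpr hpos.ne'), hdet, hpos⟩
end

section
/- Structure of the polyhedral cones of the conical subdivision: assume n ≥ 2 and let L = K + span{Γ(−𝟙)}. Then (i) dim L = d − n + 1; (ii) for every permutation σ of {1,…,n}, the cone Σ'_σ satisfies Σ'_σ + L = Σ'_σ (L is a lineality space of Σ'_σ); and (iii) Σ'_σ = L + cone{ Π_{L^⊥}(ζ_{b^σ_k} − ρ) : k = 1,…,n−1 }, where Π_{L^⊥} is the orthogonal projection of ℝ^d onto the orthogonal complement of L and cone S denotes the set of nonnegative combinations of elements of S. -/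
open scoped RealInnerProductSpace Pointwise

set_option maxHeartbeats 1000000 in
/-- structure of the polyhedral cones of the conical subdivision.
With `K = {ξ : ⟨η_j, ξ⟩ = 0 ∀ j}`, `L = K + span{Γ(−𝟙)}`,
`ρ⁻ = ρ − (1/2)Γ(−𝟙)`, `Σ_σ = conv{ζ_{b^σ_0},…,ζ_{b^σ_n}} + K` and
`Σ'_σ = cone over (Σ_σ − ρ⁻)`:
(i) `dim L = d − n + 1`; (ii) `L` is a lineality space of `Σ'_σ`, i.e.
`Σ'_σ + L = Σ'_σ`; (iii) `Σ'_σ = L + cone{Π_{L^⊥}(ζ_{b^σ_k} − ρ) : k = 1,…,n−1}`. -/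
theorem stmt13 {d n : ℕ} (hd : 2 ≤ d) (hn : 2 ≤ n) (hnd : n ≤ d)
    (ρ : EuclideanSpace ℝ (Fin d))
    (η : Fin n → EuclideanSpace ℝ (Fin d)) (hη : LinearIndependent ℝ η)
    (Γ : (Fin n → Bool) → EuclideanSpace ℝ (Fin d))
    (hev : ∀ (j : Fin n) (b : Fin n → Bool), 0 < ⟪η j, Γ b⟫)
    (ζ : (Fin n → Bool) → EuclideanSpace ℝ (Fin d))
    (hζspan : ∀ b, ζ b - ρ ∈ Submodule.span ℝ (Set.range η))
    (hζp : ∀ b (j : Fin n), b j = true → ⟪η j, ζ b - ρ⟫ = 0)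
    (hζm : ∀ b (j : Fin n), b j = false → ⟪η j, ζ b + Γ b - ρ⟫ = 0)
    (σ : Equiv.Perm (Fin n))
    (K : Submodule ℝ (EuclideanSpace ℝ (Fin d)))
    (hK : ∀ ξ, ξ ∈ K ↔ ∀ j : Fin n, ⟪η j, ξ⟫ = 0)
    (L : Submodule ℝ (EuclideanSpace ℝ (Fin d)))
    (hL : L = K ⊔ Submodule.span ℝ {Γ (fun _ => false)})
    (ρm : EuclideanSpace ℝ (Fin d)) (hρm : ρm = ρ - (1/2 : ℝ) • Γ (fun _ => false))
    (Sσ : Set (EuclideanSpace ℝ (Fin d)))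
    (hSσ : Sσ = {x | ∃ α : Fin (n + 1) → ℝ, (∀ k, 0 ≤ α k) ∧ (∑ k, α k) = 1 ∧
      ∃ ξ ∈ K, x = (∑ k : Fin (n + 1), α k • ζ (bSig σ (k : ℕ))) + ξ})
    (Sσ' : Set (EuclideanSpace ℝ (Fin d)))
    (hSσ' : Sσ' = {v | ∃ μ : ℝ, 0 ≤ μ ∧ ∃ x ∈ Sσ, v = μ • (x - ρm)}) :
    -- (i)
    Module.finrank ℝ L = d - n + 1 ∧
    -- (ii)
    Sσ' + (L : Set (EuclideanSpace ℝ (Fin d))) = Sσ' ∧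
    -- (iii)
    Sσ' = {v | ∃ l ∈ L, ∃ β : Fin (n - 1) → ℝ, (∀ k, 0 ≤ β k) ∧
      v = l + ∑ k : Fin (n - 1),
        β k • (Submodule.orthogonalProjection Lᗮ (ζ (bSig σ ((k : ℕ) + 1)) - ρ) :
          EuclideanSpace ℝ (Fin d))} := by
  obtain ⟨m, rfl⟩ : ∃ m, n = m + 2 := ⟨n - 2, by omega⟩
  set g : EuclideanSpace ℝ (Fin d) := Γ (fun _ => false) with hgdef
  -- basic facts about bSig
  have hb0 : bSig σ 0 = fun _ => false := by funext j; simp [bSig]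
  have hbn : bSig σ (m + 1 + 1) = fun _ => true := by
    funext j; simp [bSig, Fin.is_lt]; have := (σ.symm j).isLt; omega
  -- K is the orthogonal complement of span η
  have hKo : K = (Submodule.span ℝ (Set.range η))ᗮ := by
    ext ξ
    rw [hK, Submodule.mem_orthogonal]
    constructor
    · intro h u hu
      induction hu using Submodule.span_induction with
      | mem x hx => obtain ⟨j, rfl⟩ := hx; exact h j
      | zero => simp
      | add x y _ _ hx hy => rw [inner_add_left, hx, hy]; ring
      | smul c x _ hx => rw [real_inner_smul_left, hx]; ring
    · intro h j
      exact h (η j) (Submodule.subset_span ⟨j, rfl⟩)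
  have hfinK : Module.finrank ℝ K = d - (m + 2) := by
    rw [hKo]
    have h1 := Submodule.finrank_add_finrank_orthogonal (Submodule.span ℝ (Set.range η))
    rw [finrank_span_eq_card hη, finrank_euclideanSpace_fin] at h1
    simp only [Fintype.card_fin] at h1
    omega
  have hg0 : g ≠ 0 := by
    intro h
    have h2 := hev 0 (fun _ => false)
    rw [← hgdef, h, inner_zero_right] at h2
    exact lt_irrefl 0 h2
  have hgK : g ∉ K := by
    intro h
    have h0 := (hK g).mp h 0
    have h2 := hev 0 (fun _ => false)
    rw [← hgdef] at h2
    linarith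
  have hKL : ∀ ξ ∈ K, ξ ∈ L := by
    intro ξ h; rw [hL]; exact Submodule.mem_sup_left h
  have hgL : g ∈ L := by
    rw [hL]; exact Submodule.mem_sup_right (Submodule.mem_span_singleton_self g)
  -- part (i)
  have hi : Module.finrank ℝ L = d - (m + 2) + 1 := by
    have hinf : K ⊓ Submodule.span ℝ {g} = ⊥ := by
      rw [eq_bot_iff]
      intro x hx
      rw [Submodule.mem_inf] at hx
      obtain ⟨hxK, hxs⟩ := hx
      obtain ⟨c, rfl⟩ := Submodule.mem_span_singleton.mp hxs
      rcases eq_or_ne c 0 with rfl | hc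
      · simp
      · exact absurd (by simpa [smul_smul, inv_mul_cancel₀ hc] using K.smul_mem c⁻¹ hxK) hgK
    have h2 := Submodule.finrank_sup_add_finrank_inf_eq K (Submodule.span ℝ {g})
    rw [hinf, finrank_span_singleton hg0, hfinK] at h2
    rw [hL]
    simp only [finrank_bot] at h2
    omega
  -- the top vertex is ρ
  have hζtop : ζ (bSig σ (m + 1 + 1)) = ρ := by
    have h1 := hζspan (bSig σ (m + 1 + 1))
    have h2 : ζ (bSig σ (m + 1 + 1)) - ρ ∈ K :=
      (hK _).mpr fun j => hζp _ j (by rw [hbn])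
    rw [hKo] at h2
    have h3 : ζ (bSig σ (m + 1 + 1)) - ρ = 0 :=
      Submodule.disjoint_def.mp (Submodule.orthogonal_disjoint _) _ h1 h2
    have := sub_eq_zero.mp h3
    exact this
  -- the bottom vertex
  set κ : EuclideanSpace ℝ (Fin d) := ζ (bSig σ 0) + g - ρ with hκdef
  have hκK : κ ∈ K := by
    rw [hκdef, hgdef, hb0]
    exact (hK _).mpr fun j => hζm _ j rfl
  have hζ0eq : ζ (bSig σ 0) = ρ - g + κ := by rw [hκdef]; abel
  -- basic points of Sσ
  have hpointS : ∀ (k : ℕ) (hk : k < m + 2 + 1), ∀ ξ ∈ K, ζ (bSig σ k) + ξ ∈ Sσ := by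
    intro k hk ξ hξ
    rw [hSσ]
    refine ⟨fun j => if j = ⟨k, hk⟩ then 1 else 0, fun j => by by_cases h : j = ⟨k, hk⟩ <;> simp [h],
      by simp, ξ, hξ, ?_⟩
    congr 1
    simp [ite_smul]
  -- Sσ is convex
  have hconv : ∀ x ∈ Sσ, ∀ y ∈ Sσ, ∀ t : ℝ, 0 ≤ t → t ≤ 1 → t • x + (1 - t) • y ∈ Sσ := by
    intro x hx y hy t ht ht1
    rw [hSσ] at hx hy ⊢
    obtain ⟨α, hα, hαs, ξ, hξ, rfl⟩ := hx
    obtain ⟨β, hβ, hβs, ξ', hξ', rfl⟩ := hy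
    refine ⟨fun k => t * α k + (1 - t) * β k,
      fun k => add_nonneg (mul_nonneg ht (hα k)) (mul_nonneg (by linarith) (hβ k)), ?_,
      t • ξ + (1 - t) • ξ', K.add_mem (K.smul_mem _ hξ) (K.smul_mem _ hξ'), ?_⟩
    · rw [Finset.sum_add_distrib, ← Finset.mul_sum, ← Finset.mul_sum, hαs, hβs]; ring
    · simp only [add_smul, mul_smul, Finset.sum_add_distrib, smul_add, Finset.smul_sum]
      abel
  -- Sσ' is closed under addition and nonnegative scaling
  have hsmul : ∀ (c : ℝ), 0 ≤ c → ∀ v ∈ Sσ', c • v ∈ Sσ' := by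
    intro c hc v hv
    rw [hSσ'] at hv ⊢
    obtain ⟨μ, hμ, x, hx, rfl⟩ := hv
    exact ⟨c * μ, mul_nonneg hc hμ, x, hx, (mul_smul c μ _).symm⟩
  have hadd : ∀ v ∈ Sσ', ∀ w ∈ Sσ', v + w ∈ Sσ' := by
    intro v hv w hw
    rw [hSσ'] at hv hw ⊢
    obtain ⟨μ, hμ, x, hx, rfl⟩ := hv
    obtain ⟨ν, hν, y, hy, rfl⟩ := hw
    rcases (add_nonneg hμ hν).eq_or_lt with h0 | hpos
    · have hμ0 : μ = 0 := by linarith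
      have hν0 : ν = 0 := by linarith
      exact ⟨0, le_refl 0, x, hx, by simp [hμ0, hν0]⟩
    · have hne : μ + ν ≠ 0 := hpos.ne'
      refine ⟨μ + ν, hpos.le, (μ/(μ+ν)) • x + (1 - μ/(μ+ν)) • y,
        hconv x hx y hy _ (div_nonneg hμ hpos.le) ((div_le_one hpos).mpr (by linarith)), ?_⟩
      match_scalars <;> field_simp <;> ring
  -- pieces of L inside Sσ'
  have hghalfpos : ∀ c : ℝ, 0 ≤ c → c • g ∈ Sσ' := by
    intro c hc
    rw [hSσ']
    refine ⟨2*c, by linarith, ζ (bSig σ (m + 1 + 1)) + 0,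
      hpointS (m + 1 + 1) (by omega) 0 K.zero_mem, ?_⟩
    rw [hζtop, hρm]
    module
  have hKadd : ∀ ξ ∈ K, ξ + (1/2:ℝ) • g ∈ Sσ' := by
    intro ξ hξ
    rw [hSσ']
    refine ⟨1, zero_le_one, ζ (bSig σ (m + 1 + 1)) + ξ,
      hpointS (m + 1 + 1) (by omega) ξ hξ, ?_⟩
    rw [hζtop, hρm]
    module
  have hmghalf : ∀ c : ℝ, 0 ≤ c → (-c) • g ∈ Sσ' := by
    intro c hc
    rw [hSσ']
    refine ⟨2*c, by linarith, ζ (bSig σ 0) + (-κ), hpointS 0 (by omega) _ (K.neg_mem hκK), ?_⟩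
    rw [hρm, hκdef]
    module
  have hLsub : ∀ l ∈ L, l ∈ Sσ' := by
    intro l hl
    rw [hL] at hl
    obtain ⟨ξ, hξ, y, hy, rfl⟩ := Submodule.mem_sup.mp hl
    obtain ⟨c, rfl⟩ := Submodule.mem_span_singleton.mp hy
    have hξ' : ξ ∈ Sσ' := by
      have h1 := hadd _ (hKadd ξ hξ) _ (hmghalf (1/2) (by norm_num))
      convert h1 using 1
      module
    rcases le_or_gt 0 c with hc | hc
    · exact hadd _ hξ' _ (hghalfpos c hc)
    · have h2 := hmghalf (-c) (by linarith)
      rw [neg_neg] at h2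
      exact hadd _ hξ' _ h2
  have h0mem : (0 : EuclideanSpace ℝ (Fin d)) ∈ Sσ' := by
    rw [hSσ']
    exact ⟨0, le_refl 0, ζ (bSig σ 0) + 0, hpointS 0 (by omega) 0 K.zero_mem, by simp⟩
  -- the generators are in Sσ'
  have hwmem : ∀ i : Fin (m+1),
      (Submodule.orthogonalProjection Lᗮ (ζ (bSig σ ((i:ℕ)+1)) - ρ) : EuclideanSpace ℝ (Fin d)) ∈ Sσ' := by
    intro i
    have hdec : (Submodule.orthogonalProjection L (ζ (bSig σ ((i:ℕ)+1)) - ρ) : EuclideanSpace ℝ (Fin d))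
        + (Submodule.orthogonalProjection Lᗮ (ζ (bSig σ ((i:ℕ)+1)) - ρ) : EuclideanSpace ℝ (Fin d))
        = ζ (bSig σ ((i:ℕ)+1)) - ρ := Submodule.starProjection_add_starProjection_orthogonal (K := L)
      (ζ (bSig σ ((i:ℕ)+1)) - ρ)
    have h1 : (ζ (bSig σ ((i:ℕ)+1)) + 0) - ρm ∈ Sσ' := by
      rw [hSσ']
      exact ⟨1, zero_le_one, _, hpointS _ (by have := i.isLt; omega) 0 K.zero_mem,
        (one_smul ℝ _).symm⟩
    have h2 : -(Submodule.orthogonalProjection L (ζ (bSig σ ((i:ℕ)+1)) - ρ) : EuclideanSpace ℝ (Fin d))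
        - (1/2:ℝ) • g ∈ Sσ' :=
      hLsub _ (L.sub_mem (L.neg_mem (Submodule.coe_mem _)) (L.smul_mem _ hgL))
    have h3 := hadd _ h1 _ h2
    convert h3 using 1
    have hw : (Submodule.orthogonalProjection Lᗮ (ζ (bSig σ ((i:ℕ)+1)) - ρ) : EuclideanSpace ℝ (Fin d))
        = (ζ (bSig σ ((i:ℕ)+1)) - ρ)
          - (Submodule.orthogonalProjection L (ζ (bSig σ ((i:ℕ)+1)) - ρ) : EuclideanSpace ℝ (Fin d)) := by
      rw [eq_sub_iff_add_eq, add_comm]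
      exact hdec
    rw [hw, hρm]
    module
  refine ⟨hi, ?_, ?_⟩
  · -- part (ii)
    apply Set.Subset.antisymm
    · rintro _ ⟨a, ha, b, hb, rfl⟩
      exact hadd a ha b (hLsub b hb)
    · intro v hv
      exact ⟨v, hv, 0, L.zero_mem, by simp⟩
  · -- part (iii)
    show Sσ' = {v | ∃ l ∈ L, ∃ β : Fin (m+1) → ℝ, (∀ k, 0 ≤ β k) ∧
      v = l + ∑ k : Fin (m+1),
        β k • (Submodule.orthogonalProjection Lᗮ (ζ (bSig σ ((k : ℕ) + 1)) - ρ) :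
          EuclideanSpace ℝ (Fin d))}
    apply Set.Subset.antisymm
    · -- Sσ' ⊆ RHS
      intro v hv
      rw [hSσ'] at hv
      obtain ⟨μ, hμ, x, hx, rfl⟩ := hv
      rw [hSσ] at hx
      obtain ⟨α, hα, hαs, ξ, hξ, rfl⟩ := hx
      have hζmid : ∀ i : Fin (m+1), ζ (bSig σ ((i:ℕ)+1))
          = ρ + (Submodule.orthogonalProjection L (ζ (bSig σ ((i:ℕ)+1)) - ρ) : EuclideanSpace ℝ (Fin d))
            + (Submodule.orthogonalProjection Lᗮ (ζ (bSig σ ((i:ℕ)+1)) - ρ) : EuclideanSpace ℝ (Fin d)) := by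
        intro i
        have h : (Submodule.orthogonalProjection L (ζ (bSig σ ((i:ℕ)+1)) - ρ) : EuclideanSpace ℝ (Fin d))
            + (Submodule.orthogonalProjection Lᗮ (ζ (bSig σ ((i:ℕ)+1)) - ρ) : EuclideanSpace ℝ (Fin d))
            = ζ (bSig σ ((i:ℕ)+1)) - ρ := Submodule.starProjection_add_starProjection_orthogonal (K := L)
          (ζ (bSig σ ((i:ℕ)+1)) - ρ)
        rw [add_assoc, h]
        abel
      have hαsplit := hαs
      rw [Fin.sum_univ_succ, Fin.sum_univ_castSucc] at hαsplit
      have hT : (∑ i : Fin (m+1), α i.castSucc.succ)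
          = 1 - α 0 - α (Fin.last (m+1)).succ := by linarith [hαsplit]
      have hSsplit : (∑ k : Fin (m + 2 + 1), α k • ζ (bSig σ (k : ℕ)))
          = α 0 • ζ (bSig σ 0)
            + (∑ i : Fin (m+1), α i.castSucc.succ • ζ (bSig σ ((i:ℕ)+1))
              + α (Fin.last (m+1)).succ • ζ (bSig σ (m + 1 + 1))) := by
        rw [Fin.sum_univ_succ, Fin.sum_univ_castSucc]
        simp only [Fin.val_succ, Fin.coe_castSucc, Fin.val_last, Fin.val_zero]
      have hmid : (∑ i : Fin (m+1), α i.castSucc.succ • ζ (bSig σ ((i:ℕ)+1)))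
          = (∑ i : Fin (m+1), α i.castSucc.succ) • ρ
            + (∑ i : Fin (m+1), α i.castSucc.succ •
                (Submodule.orthogonalProjection L (ζ (bSig σ ((i:ℕ)+1)) - ρ) : EuclideanSpace ℝ (Fin d)))
            + (∑ i : Fin (m+1), α i.castSucc.succ •
                (Submodule.orthogonalProjection Lᗮ (ζ (bSig σ ((i:ℕ)+1)) - ρ) : EuclideanSpace ℝ (Fin d))) := by
        rw [Finset.sum_smul, ← Finset.sum_add_distrib, ← Finset.sum_add_distrib]
        refine Finset.sum_congr rfl fun i _ => ?_
        conv_lhs => rw [hζmid i]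
        rw [smul_add, smul_add]
      refine ⟨μ • (α 0 • (κ - g)
          + (∑ i : Fin (m+1), α i.castSucc.succ •
              (Submodule.orthogonalProjection L (ζ (bSig σ ((i:ℕ)+1)) - ρ) : EuclideanSpace ℝ (Fin d)))
          + ξ + (1/2:ℝ) • g),
        L.smul_mem _ (L.add_mem (L.add_mem (L.add_mem
          (L.smul_mem _ (L.sub_mem (hKL _ hκK) hgL))
          (Submodule.sum_mem _ fun i _ => L.smul_mem _ (Submodule.coe_mem _)))
          (hKL ξ hξ)) (L.smul_mem _ hgL)),
        fun i => μ * α i.castSucc.succ, fun i => mul_nonneg hμ (hα _), ?_⟩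
      have hsum : (∑ i : Fin (m+1), (μ * α i.castSucc.succ) •
            (Submodule.orthogonalProjection Lᗮ (ζ (bSig σ ((i:ℕ)+1)) - ρ) : EuclideanSpace ℝ (Fin d)))
          = μ • ∑ i : Fin (m+1), α i.castSucc.succ •
            (Submodule.orthogonalProjection Lᗮ (ζ (bSig σ ((i:ℕ)+1)) - ρ) : EuclideanSpace ℝ (Fin d)) := by
        rw [Finset.smul_sum]
        exact Finset.sum_congr rfl fun i _ => (smul_smul μ _ _).symm
      rw [hρm, hSsplit, hζtop, hζ0eq, hmid, hT, hsum]
      module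
    · -- RHS ⊆ Sσ'
      rintro v ⟨l, hl, β, hβ, rfl⟩
      apply hadd _ (hLsub l hl)
      apply Finset.sum_induction _ (· ∈ Sσ') (fun a b ha hb => hadd a ha b hb) h0mem
      intro k _
      exact hsmul (β k) (hβ k) _ (hwmem k)
end

section
/- Linearity of the B-derivative for the symmetric piecewise-constant vector field: let n = d, let η_j = e_j be the standard basis vectors of ℝ^d, fix δ ∈ ℝ with |δ| < 1, and let Γ(b) = 𝟙 − δ·b (componentwise, so Γ(b)_j = 1 − δ b_j); note the event condition ⟨e_j, Γ(b)⟩ = 1 − δ b_j > 0 holds. Then for every permutation σ of {1,…,d}, the saltation matrix satisfies M_σ = ((1 − δ)/(1 + δ)) · I_d; in particular all saltation matrices coincide and the first-order flow approximation is linear. -/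
open Matrix

/-- the numerical value of a sign (`true ↔ +1`, `false ↔ −1`). -/
def sgn (b : Bool) : ℝ := if b then 1 else -1

/-- linearity of the B-derivative for the symmetric
piecewise-constant vector field.  With `n = d`, `η_j = e_j` the standard basis,
`|δ| < 1` and `Γ(b)_j = 1 − δ b_j` (so the event condition
`⟨e_j, Γ(b)⟩ = 1 − δ b_j > 0` holds), every saltation matrix equals
`((1 − δ)/(1 + δ)) · I_d`. -/
theorem stmt15 {d : ℕ} (hd : 1 ≤ d) (δ : ℝ) (hδ : |δ| < 1)
    (σ : Equiv.Perm (Fin d)) :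
    saltation (fun j : Fin d => (Pi.single j 1 : Fin d → ℝ))
        (fun b : Fin d → Bool => fun j : Fin d => 1 - δ * sgn (b j)) σ =
      ((1 - δ) / (1 + δ)) • (1 : Matrix (Fin d) (Fin d) ℝ) := by
  have h1 : (1:ℝ) + δ ≠ 0 := by
    have := abs_lt.mp hδ; nlinarith [this.1, this.2]
  set c : ℝ := (1 - δ) / (1 + δ) with hc
  have hfac : ∀ k : Fin d,
      ((1 : Matrix (Fin d) (Fin d) ℝ) +
        ((fun j : Fin d => (Pi.single j 1 : Fin d → ℝ)) (σ k) ⬝ᵥ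
            (fun b : Fin d → Bool => fun j : Fin d => 1 - δ * sgn (b j)) (bSig σ (k : ℕ)))⁻¹ •
          vecMulVec ((fun b : Fin d → Bool => fun j : Fin d => 1 - δ * sgn (b j)) (bSig σ ((k : ℕ) + 1))
              - (fun b : Fin d → Bool => fun j : Fin d => 1 - δ * sgn (b j)) (bSig σ (k : ℕ)))
            ((fun j : Fin d => (Pi.single j 1 : Fin d → ℝ)) (σ k)))
      = Matrix.diagonal (fun i => if i = σ k then c else 1) := by
    intro k
    have hdot : (Pi.single (σ k) 1 : Fin d → ℝ) ⬝ᵥ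
        (fun j : Fin d => 1 - δ * sgn (bSig σ (k : ℕ) j)) = 1 + δ := by
      rw [single_dotProduct]
      simp [bSig, sgn]
    ext i j
    rw [Matrix.add_apply, Matrix.smul_apply, hdot, Matrix.vecMulVec_apply]
    simp only [Pi.sub_apply]
    by_cases hij : i = σ k
    · by_cases hj : j = σ k
      · have hb1 : bSig σ ((k:ℕ)+1) i = true := by
          simp [bSig, hij]
        have hb0 : bSig σ (k:ℕ) i = false := by
          simp [bSig, hij]
        rw [hij, hj] at *
        simp only [hb1, hb0, Matrix.diagonal_apply, Matrix.one_apply, if_pos rfl,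
          Pi.single_eq_same, sgn]
        simp only [if_true, if_false, Bool.false_eq_true, Bool.true_eq_false,
          smul_eq_mul]
        rw [hc]
        linear_combination (-1 : ℝ) * mul_inv_cancel₀ h1
      · simp [Matrix.diagonal_apply, Matrix.one_apply, Pi.single_apply, hj,
          hij, (Ne.symm hj : σ k ≠ j)]
    · have hbb : bSig σ ((k:ℕ)+1) i = bSig σ (k:ℕ) i := by
        simp only [bSig, decide_eq_decide]
        have hne : (σ.symm i : ℕ) ≠ (k : ℕ) := by
          intro h
          exact hij (by rw [← Fin.ext h, Equiv.apply_symm_apply])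
        omega
      rw [hbb]
      simp [Matrix.diagonal_apply, Matrix.one_apply, hij]
  unfold saltation
  rw [show (fun k : Fin d =>
      (1 : Matrix (Fin d) (Fin d) ℝ) +
        ((fun j : Fin d => (Pi.single j 1 : Fin d → ℝ)) (σ k) ⬝ᵥ
            (fun b : Fin d → Bool => fun j : Fin d => 1 - δ * sgn (b j)) (bSig σ (k : ℕ)))⁻¹ •
          vecMulVec ((fun b : Fin d → Bool => fun j : Fin d => 1 - δ * sgn (b j)) (bSig σ ((k : ℕ) + 1))
              - (fun b : Fin d → Bool => fun j : Fin d => 1 - δ * sgn (b j)) (bSig σ (k : ℕ)))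
            ((fun j : Fin d => (Pi.single j 1 : Fin d → ℝ)) (σ k)))
      = (fun k : Fin d => Matrix.diagonal (fun i => if i = σ k then c else 1)) from funext hfac]
  have hmap : List.ofFn (fun k : Fin d => Matrix.diagonal (fun i => if i = σ k then c else 1))
      = List.map (Matrix.diagonalRingHom (Fin d) ℝ)
          (List.ofFn (fun k : Fin d => fun i => if i = σ k then c else 1)) := by
    rw [List.map_ofFn]; rfl
  rw [hmap, ← List.map_reverse, ← map_list_prod]
  have : ((List.ofFn (fun k : Fin d => fun i : Fin d => if i = σ k then c else 1)).reverse).prod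
      = fun _ : Fin d => c := by
    rw [List.prod_reverse, List.prod_ofFn]
    funext i
    rw [Finset.prod_apply]
    have : ∀ k : Fin d, (if i = σ k then c else 1) = (if σ.symm i = k then c else 1) := by
      intro k
      congr 1
      simp [Equiv.eq_symm_apply, eq_comm]
    simp_rw [this]
    simp
  rw [this]
  ext i j
  by_cases hij : i = j <;>
    simp [Matrix.diagonalRingHom_apply, Matrix.diagonal_apply, Matrix.one_apply, hij]
end

section
/- Saltation matrices of mechanical systems with soft dissipative unilateral constraints commute: the matrices satisfy M_i M_j = M_j M_i = I_{2d} + c_i w_i u_i^⊤ + c_j w_j u_j^⊤ for all i, j ∈ {1,…,n}, and for every permutation π of {1,…,n} the product M_{π(1)} M_{π(2)} ⋯ M_{π(n)} equals I_{2d} + Σ_{i=1}^n c_i w_i u_i^⊤; in particular the composite saltation matrix is independent of the order in which the constraints are crossed. -/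
open Matrix

/-- saltation matrices of mechanical systems with soft dissipative
unilateral constraints commute.  The state space `ℝ^{2d} = ℝ^d × ℝ^d` is indexed
by `Fin d ⊕ Fin d` (configuration ⊕ velocity); constraint `i` contributes
`u_i = (a_i, 0)`, `w_i = (0, a_i)` and `M_i = I_{2d} + c_i w_i u_i^⊤`.
Then `M_i M_j = M_j M_i = I + c_i w_i u_i^⊤ + c_j w_j u_j^⊤`, and every ordered
product `M_{π(1)} ⋯ M_{π(n)}` equals `I + Σ_i c_i w_i u_i^⊤`, independently of
the order `π`. -/
theorem stmt16 {d n : ℕ} (hd : 1 ≤ d) (hn : 1 ≤ n)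
    (a : Fin n → Fin d → ℝ) (c : Fin n → ℝ)
    (u w : Fin n → (Fin d ⊕ Fin d) → ℝ)
    (hu : ∀ i, u i = Sum.elim (a i) (0 : Fin d → ℝ))
    (hw : ∀ i, w i = Sum.elim (0 : Fin d → ℝ) (a i))
    (M : Fin n → Matrix (Fin d ⊕ Fin d) (Fin d ⊕ Fin d) ℝ)
    (hM : ∀ i, M i = 1 + c i • vecMulVec (w i) (u i)) :
    (∀ i j : Fin n,
      M i * M j = M j * M i ∧
      M i * M j = 1 + c i • vecMulVec (w i) (u i) + c j • vecMulVec (w j) (u j)) ∧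
    (∀ π : Equiv.Perm (Fin n),
      (List.ofFn (fun k : Fin n => M (π k))).prod =
        1 + ∑ i : Fin n, c i • vecMulVec (w i) (u i)) := by
  set N : Fin n → Matrix (Fin d ⊕ Fin d) (Fin d ⊕ Fin d) ℝ :=
    fun i => c i • vecMulVec (w i) (u i) with hN
  have hzero : ∀ i j : Fin n, N i * N j = 0 := by
    intro i j
    ext x y
    simp [hN, mul_apply, vecMulVec_apply, hu, hw, Fintype.sum_sum_type, mul_comm,
      Matrix.smul_apply]
  have hMN : ∀ i, M i = 1 + N i := hM
  have key : ∀ i j, M i * M j = 1 + N i + N j := by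
    intro i j
    rw [hMN i, hMN j, add_mul, mul_add, mul_add]
    simp only [one_mul, mul_one, hzero i j, add_zero]
    abel
  constructor
  · intro i j
    refine ⟨?_, key i j⟩
    rw [key i j, key j i]; abel
  · intro π
    have main : ∀ l : List (Fin n),
        ((l.map M).prod = 1 + (l.map N).sum) := by
      intro l
      induction l with
      | nil => simp
      | cons i t ih =>
        simp only [List.map_cons, List.prod_cons, List.sum_cons, ih, hMN i]
        have hNs : ∀ s : List (Fin n), N i * (s.map N).sum = 0 := by
          intro s
          induction s with
          | nil => simp
          | cons j s ihs =>
            simp [List.map_cons, List.sum_cons, mul_add, hzero, ihs]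
        rw [add_mul, one_mul, mul_add, mul_one, hNs]
        abel
    have : (List.ofFn (fun k : Fin n => M (π k))) = ((List.ofFn fun k => π k).map M) := by
      rw [List.map_ofFn]; rfl
    rw [this, main]
    congr 1
    rw [List.map_ofFn]
    rw [List.sum_ofFn]
    exact Equiv.sum_comp π N
end
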